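/- Every lattice parallelogram (Minkowski sum of two non-parallel lattice segments in ℤ²) is a normal lattice polygon. -/

import Mathlib

open Set Pointwise

/-- `x` is a lattice point (all coordinates are integers). -/
def IsLat {n : ℕ} (x : Fin n → ℝ) : Prop := ∀ i, ∃ m : ℤ, x i = (m : ℝ)

/-- The set of lattice points of `P`. -/
def latPts {n : ℕ} (P : Set (Fin n → ℝ)) : Set (Fin n → ℝ) := {x ∈ P | IsLat x}

/-- `P` is a lattice polytope: the convex hull of finitely many lattice points. -/
def IsLatticePolytope {n : ℕ} (P : Set (Fin n → ℝ)) : Prop :=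
  ∃ S : Finset (Fin n → ℝ), (∀ x ∈ S, IsLat x) ∧ P = convexHull ℝ (S : Set (Fin n → ℝ))

/-- The dimension of a polytope: the dimension of its affine hull. -/
noncomputable def polyDim {n : ℕ} (P : Set (Fin n → ℝ)) : ℕ :=
  Module.finrank ℝ (affineSpan ℝ P).direction

/-- `P` is normal: for every `k ≥ 1`, every lattice point of the dilate `k • P`
is a sum of `k` lattice points of `P`. -/
def IsNormal {n : ℕ} (P : Set (Fin n → ℝ)) : Prop :=
  ∀ k : ℕ, 1 ≤ k → ∀ v ∈ latPts ((k : ℝ) • P),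
    ∃ u : Fin k → (Fin n → ℝ), (∀ i, u i ∈ latPts P) ∧ v = ∑ i, u i

/-!
A point of `k • [a, b]` is `k • a + σ • (b - a)` with `0 ≤ σ ≤ k`. Taking `m ≤ k - 1` copies of
`b` and `k - 1 - m` copies of `a`, with `m ≤ σ ≤ m + 1`, leaves a remainder
`a + (σ - m) • (b - a)` in `[a, b]`. Doing this in each summand of a Minkowski sum of lattice
segments writes a lattice point of `k • P` as `k - 1` lattice points of `P` plus a point of `P`,
and that last point is a lattice point because it is a difference of lattice points.
-/

variable {d : ℕ}

def latticeAddSubgroup (d : ℕ) : AddSubgroup (Fin d → ℝ) where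
  carrier := {x | IsLat x}
  add_mem' {x y} hx hy i := by
    obtain ⟨m, hm⟩ := hx i
    obtain ⟨m', hm'⟩ := hy i
    exact ⟨m + m', by simp [hm, hm']⟩
  zero_mem' _ := ⟨0, by simp⟩
  neg_mem' {x} hx i := by
    obtain ⟨m, hm⟩ := hx i
    exact ⟨-m, by simp [hm]⟩

lemma Fin.sum_ite_val_lt {M : Type*} [AddCommMonoid M] {n m : ℕ} (hm : m ≤ n) (x : M) :
    ∑ i : Fin n, (if (i : ℕ) < m then x else 0) = m • x := by
  rw [← Finset.sum_filter, Finset.sum_const, Fin.card_filter_val_lt, min_eq_right hm]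

lemma exists_nat_le_of_le_add_one {σ : ℝ} {n : ℕ} (h₀ : 0 ≤ σ) (h₁ : σ ≤ n + 1) :
    ∃ m ≤ n, (m : ℝ) ≤ σ ∧ σ - m ≤ 1 := by
  refine ⟨min ⌊σ⌋₊ n, min_le_right _ _, ?_, ?_⟩
  · exact (Nat.cast_le.mpr (min_le_left _ _)).trans (Nat.floor_le h₀)
  · rcases le_total ⌊σ⌋₊ n with h | h
    · rw [min_eq_left h]
      linarith [Nat.lt_floor_add_one σ]
    · rw [min_eq_right h]
      linarith

def HasLatticeRemainder (S : Set (Fin d → ℝ)) : Prop :=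
  ∀ n : ℕ, ∀ x ∈ ((n : ℝ) + 1) • S,
    ∃ u : Fin n → (Fin d → ℝ), (∀ i, u i ∈ latPts S) ∧ x - ∑ i, u i ∈ S

lemma hasLatticeRemainder_segment {a b : Fin d → ℝ} (ha : IsLat a) (hb : IsLat b) :
    HasLatticeRemainder (segment ℝ a b) := by
  intro n x hx
  obtain ⟨y, hy, rfl⟩ := mem_smul_set.mp hx
  rw [segment_eq_image'] at hy
  obtain ⟨s, ⟨hs₀, hs₁⟩, rfl⟩ := hy
  obtain ⟨m, hmn, hm, hm₁⟩ :=
    exists_nat_le_of_le_add_one (σ := (n + 1) * s) (by positivity) (by nlinarith)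
  refine ⟨fun i => if (i : ℕ) < m then b else a, fun i => ?_, ?_⟩
  · dsimp only
    split_ifs
    exacts [⟨right_mem_segment ℝ a b, hb⟩, ⟨left_mem_segment ℝ a b, ha⟩]
  · have hsum : ∑ i : Fin n, (if (i : ℕ) < m then b else a)
        = (n : ℝ) • a + (m : ℝ) • (b - a) := by
      simp_rw [show ∀ i : Fin n, (if (i : ℕ) < m then b else a)
          = a + (if (i : ℕ) < m then b - a else 0) from fun i => by split_ifs <;> abel]
      rw [Finset.sum_add_distrib, Fin.sum_ite_val_lt hmn, Finset.sum_const, Finset.card_univ,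
        Fintype.card_fin, Nat.cast_smul_eq_nsmul, Nat.cast_smul_eq_nsmul]
    rw [hsum, segment_eq_image']
    exact ⟨(n + 1) * s - m, ⟨by linarith, hm₁⟩, by module⟩

lemma HasLatticeRemainder.add {S T : Set (Fin d → ℝ)} (hS : HasLatticeRemainder S)
    (hT : HasLatticeRemainder T) : HasLatticeRemainder (S + T) := by
  intro n x hx
  rw [smul_add] at hx
  obtain ⟨y, hy, z, hz, rfl⟩ := hx
  obtain ⟨u, hu, hyu⟩ := hS n y hy
  obtain ⟨w, hw, hzw⟩ := hT n z hz
  refine ⟨u + w, fun i => ⟨add_mem_add (hu i).1 (hw i).1, ?_⟩, ?_⟩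
  · exact (latticeAddSubgroup d).add_mem (hu i).2 (hw i).2
  · convert add_mem_add hyu hzw using 1
    simp only [Pi.add_apply, Finset.sum_add_distrib]
    abel

lemma HasLatticeRemainder.isNormal {P : Set (Fin d → ℝ)} (hP : HasLatticeRemainder P) :
    IsNormal P := by
  rintro k hk v ⟨hv, hvLat⟩
  obtain ⟨n, rfl⟩ : ∃ n, k = n + 1 := ⟨k - 1, by omega⟩
  rw [Nat.cast_succ] at hv
  obtain ⟨u, hu, hq⟩ := hP n v hv
  have hqLat : IsLat (v - ∑ i, u i) :=
    (latticeAddSubgroup d).sub_mem hvLat ((latticeAddSubgroup d).sum_mem fun i _ => (hu i).2)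
  refine ⟨Fin.snoc u (v - ∑ i, u i), fun i => ?_, by simp [Fin.sum_univ_castSucc]⟩
  induction i using Fin.lastCases with
  | last => simpa using ⟨hq, hqLat⟩
  | cast i => simpa using hu i

theorem stmt5_general (a₁ b₁ a₂ b₂ : Fin 2 → ℝ)
    (h₁ : IsLat a₁) (h₂ : IsLat b₁) (h₃ : IsLat a₂) (h₄ : IsLat b₂) :
    IsNormal (segment ℝ a₁ b₁ + segment ℝ a₂ b₂) :=
  ((hasLatticeRemainder_segment h₁ h₂).add (hasLatticeRemainder_segment h₃ h₄)).isNormal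

/-- A lattice parallelogram, the Minkowski sum of two non-parallel lattice segments in `ℤ²`,
is normal. -/
theorem stmt5 (a₁ b₁ a₂ b₂ : Fin 2 → ℝ)
    (h₁ : IsLat a₁) (h₂ : IsLat b₁) (h₃ : IsLat a₂) (h₄ : IsLat b₂)
    (hind : LinearIndependent ℝ ![b₁ - a₁, b₂ - a₂]) :
    IsNormal (segment ℝ a₁ b₁ + segment ℝ a₂ b₂) :=
  stmt5_general a₁ b₁ a₂ b₂ h₁ h₂ h₃ h₄
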